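/- arXiv:2502.06974 — 2 statements merged into one kernel-verified Lean document; each statement's English description precedes it below -/
import Mathlib

section
/- If G is a finite subgroup of GL_n(ℚ), then there exists a lattice H in ℚⁿ (a subgroup isomorphic to ℤⁿ spanning ℚⁿ over ℚ) that is invariant under G, namely H = ⋂_{A ∈ G} A(ℤⁿ). -/
open Matrix

/-- A lattice in `ℚⁿ`: a subgroup isomorphic to `ℤⁿ` that spans `ℚⁿ` over `ℚ`. -/
def IsLattice (n : ℕ) (L : AddSubgroup (Fin n → ℚ)) : Prop :=
  Nonempty (L ≃+ (Fin n → ℤ)) ∧ Submodule.span ℚ (L : Set (Fin n → ℚ)) = ⊤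

/-- The standard lattice `ℤⁿ ⊂ ℚⁿ`. -/
def stdLattice (n : ℕ) : AddSubgroup (Fin n → ℚ) where
  carrier := {v | ∀ i, ∃ k : ℤ, v i = k}
  zero_mem' := fun i => ⟨0, by simp⟩
  add_mem' := by
    rintro a b ha hb i
    obtain ⟨k, hk⟩ := ha i
    obtain ⟨l, hl⟩ := hb i
    exact ⟨k + l, by simp [hk, hl]⟩
  neg_mem' := by
    rintro a ha i
    obtain ⟨k, hk⟩ := ha i
    exact ⟨-k, by simp [hk]⟩

/-!
The lattices `A(ℤⁿ)`, `A ∈ G`, are permuted by `G`, so their intersection `H` is `G`-invariant.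
Clearing the denominators of the finitely many matrices `A⁻¹` gives `d ≠ 0` with
`d • ℤⁿ ⊆ A(ℤⁿ)` for all `A ∈ G`, hence `d • ℤⁿ ⊆ H ⊆ ℤⁿ`. A subgroup squeezed like this is
free of rank `n` (it is a submodule of `ℤⁿ` into which `ℤⁿ` injects via `d • ·`) and spans `ℚⁿ`.
-/
theorem Submodule.finrank_eq_of_smul_mem {R M : Type*} [CommRing R] [IsDomain R]
    [IsPrincipalIdealRing R] [AddCommGroup M] [Module R M] [Module.Free R M] [Module.Finite R M]
    (N : Submodule R M) {d : R} (hd : d ≠ 0) (h : ∀ x : M, d • x ∈ N) :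
    Module.finrank R N = Module.finrank R M :=
  le_antisymm (Submodule.finrank_le N) <|
    ((LinearMap.lsmul R M d).codRestrict N h).finrank_le_finrank_of_injective
      ((LinearMap.lsmul_injective hd).codRestrict _)

theorem mem_stdLattice_iff_isInteger {n : ℕ} {v : Fin n → ℚ} :
    v ∈ stdLattice n ↔ ∀ i, IsLocalization.IsInteger ℤ (v i) :=
  forall_congr' fun i => by simp [IsLocalization.IsInteger, eq_comm]

theorem mulVec_mem_stdLattice {n : ℕ} {B : Matrix (Fin n) (Fin n) ℚ}
    (hB : ∀ i j, IsLocalization.IsInteger ℤ (B i j)) {v : Fin n → ℚ} (hv : v ∈ stdLattice n) :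
    B *ᵥ v ∈ stdLattice n := by
  rw [mem_stdLattice_iff_isInteger] at hv ⊢
  simp only [mulVec, dotProduct]
  exact fun i => Subsemiring.sum_mem _ fun j _ => Subsemiring.mul_mem _ (hB i j) (hv j)

theorem exists_smul_mulVec_mem_stdLattice {n : ℕ} {ι : Type*} [Finite ι]
    (B : ι → Matrix (Fin n) (Fin n) ℚ) :
    ∃ d : ℤ, d ≠ 0 ∧ ∀ k, ∀ v ∈ stdLattice n, d • B k *ᵥ v ∈ stdLattice n := by
  obtain ⟨⟨d, hd⟩, hdB⟩ := IsLocalization.exist_integer_multiples_of_finite (nonZeroDivisors ℤ)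
    fun x : ι × Fin n × Fin n => B x.1 x.2.1 x.2.2
  refine ⟨d, nonZeroDivisors.ne_zero hd, fun k v hv => ?_⟩
  rw [← smul_mulVec]
  exact mulVec_mem_stdLattice (fun i j => hdB (k, i, j)) hv

namespace stdLattice

variable (n : ℕ)

def intCastLinearMap : (Fin n → ℤ) →ₗ[ℤ] Fin n → ℚ :=
  (Int.castAddHom ℚ).toIntLinearMap.compLeft (Fin n)

theorem intCastLinearMap_injective : Function.Injective (intCastLinearMap n) :=
  fun _ _ h => funext fun i => Int.cast_injective (congrFun h i)

theorem range_intCastLinearMap :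
    LinearMap.range (intCastLinearMap n) = AddSubgroup.toIntSubmodule (stdLattice n) := by
  ext v
  refine ⟨?_, fun hv => ?_⟩
  · rintro ⟨w, rfl⟩ i
    exact ⟨w i, rfl⟩
  · choose w hw using hv
    exact ⟨w, funext fun i => (hw i).symm⟩

variable {n}

theorem span_eq_top_of_smul_mem {L : AddSubgroup (Fin n → ℚ)} {d : ℤ} (hd : d ≠ 0)
    (hdL : ∀ v ∈ stdLattice n, d • v ∈ L) : Submodule.span ℚ (L : Set (Fin n → ℚ)) = ⊤ := by
  rw [eq_top_iff, ← (Pi.basisFun ℚ (Fin n)).span_eq, Submodule.span_le]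
  rintro _ ⟨i, rfl⟩
  have hmem : d • Pi.basisFun ℚ (Fin n) i ∈ L :=
    hdL _ fun j => ⟨(Pi.single i 1 : Fin n → ℤ) j, by
      simp [Pi.single_apply, apply_ite (Int.cast : ℤ → ℚ)]⟩
  have : Pi.basisFun ℚ (Fin n) i = (d : ℚ)⁻¹ • d • Pi.basisFun ℚ (Fin n) i := by
    rw [← Int.cast_smul_eq_zsmul ℚ, inv_smul_smul₀ (Int.cast_ne_zero.mpr hd)]
  rw [this]
  exact Submodule.smul_mem _ _ (Submodule.subset_span hmem)

theorem nonempty_addEquiv_of_smul_mem {L : AddSubgroup (Fin n → ℚ)} (hL : L ≤ stdLattice n)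
    {d : ℤ} (hd : d ≠ 0) (hdL : ∀ v ∈ stdLattice n, d • v ∈ L) :
    Nonempty (L ≃+ (Fin n → ℤ)) := by
  set N := (AddSubgroup.toIntSubmodule L).comap (intCastLinearMap n)
  have hmap : N.map (intCastLinearMap n) = AddSubgroup.toIntSubmodule L :=
    Submodule.map_comap_eq_of_le (by rwa [range_intCastLinearMap])
  have hN : Module.finrank ℤ N = n := by
    rw [N.finrank_eq_of_smul_mem hd fun w => ?_, Module.finrank_fin_fun]
    rw [Submodule.mem_comap, map_smul]
    exact hdL _ ((range_intCastLinearMap n).le ⟨w, rfl⟩)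
  exact ⟨((Submodule.equivMapOfInjective _ (intCastLinearMap_injective n) N).trans
    (LinearEquiv.ofEq _ _ hmap)).symm.toAddEquiv.trans
    (Module.finBasisOfFinrankEq ℤ N hN).equivFun.toAddEquiv⟩

theorem isLattice_of_smul_mem {L : AddSubgroup (Fin n → ℚ)} (hL : L ≤ stdLattice n)
    {d : ℤ} (hd : d ≠ 0) (hdL : ∀ v ∈ stdLattice n, d • v ∈ L) : IsLattice n L :=
  ⟨nonempty_addEquiv_of_smul_mem hL hd hdL, span_eq_top_of_smul_mem hd hdL⟩

end stdLattice

section GeneralLinearGroup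

variable {n : ℕ}

theorem mem_map_mulVecLin_iff (A : GL (Fin n) ℚ) {K : AddSubgroup (Fin n → ℚ)} {x : Fin n → ℚ} :
    x ∈ K.map ((A : Matrix (Fin n) (Fin n) ℚ).mulVecLin.toAddMonoidHom) ↔
      ((A⁻¹ : GL (Fin n) ℚ) : Matrix (Fin n) (Fin n) ℚ) *ᵥ x ∈ K := by
  constructor
  · rintro ⟨y, hy, rfl⟩
    simpa [mulVec_mulVec] using hy
  · intro h
    exact ⟨_, h, by simp [mulVec_mulVec]⟩

theorem map_map_mulVecLin (A B : GL (Fin n) ℚ) (K : AddSubgroup (Fin n → ℚ)) :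
    (K.map ((B : Matrix (Fin n) (Fin n) ℚ).mulVecLin.toAddMonoidHom)).map
        ((A : Matrix (Fin n) (Fin n) ℚ).mulVecLin.toAddMonoidHom) =
      K.map (((A * B : GL (Fin n) ℚ) : Matrix (Fin n) (Fin n) ℚ).mulVecLin.toAddMonoidHom) := by
  rw [AddSubgroup.map_map, Units.val_mul, mulVecLin_mul]
  rfl

theorem iInf_map_mulVecLin_le (G : Subgroup (GL (Fin n) ℚ)) (K : AddSubgroup (Fin n → ℚ)) :
    ⨅ B : G, K.map (((B : GL (Fin n) ℚ) : Matrix (Fin n) (Fin n) ℚ).mulVecLin.toAddMonoidHom) ≤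
      K :=
  iInf_le_of_le 1 fun x hx => by simpa using (mem_map_mulVecLin_iff 1).mp hx

theorem map_iInf_map_mulVecLin (G : Subgroup (GL (Fin n) ℚ)) (K : AddSubgroup (Fin n → ℚ))
    {A : GL (Fin n) ℚ} (hA : A ∈ G) :
    (⨅ B : G,
        K.map (((B : GL (Fin n) ℚ) : Matrix (Fin n) (Fin n) ℚ).mulVecLin.toAddMonoidHom)).map
        ((A : Matrix (Fin n) (Fin n) ℚ).mulVecLin.toAddMonoidHom) =
      ⨅ B : G,
        K.map (((B : GL (Fin n) ℚ) : Matrix (Fin n) (Fin n) ℚ).mulVecLin.toAddMonoidHom) := by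
  rw [AddSubgroup.map_iInf _ (mulVec_injective_of_isUnit A.isUnit)]
  simp_rw [map_map_mulVecLin]
  exact (Equiv.mulLeft (⟨A, hA⟩ : G)).iInf_congr fun _ => rfl

end GeneralLinearGroup

/-- If `G ≤ GL n ℚ` is finite, then `H = ⋂_{A ∈ G} A(ℤⁿ)` is a `G`-invariant
lattice in `ℚⁿ`. -/
theorem stmt_3 (n : ℕ) (G : Subgroup (GL (Fin n) ℚ)) (hG : Finite G)
    (H : AddSubgroup (Fin n → ℚ))
    (hH : H = ⨅ A : G, AddSubgroup.map
      (((A : GL (Fin n) ℚ) : Matrix (Fin n) (Fin n) ℚ).mulVecLin.toAddMonoidHom)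
      (stdLattice n)) :
    IsLattice n H ∧ ∀ A ∈ G, AddSubgroup.map
      (((A : GL (Fin n) ℚ) : Matrix (Fin n) (Fin n) ℚ).mulVecLin.toAddMonoidHom) H = H := by
  subst hH
  obtain ⟨d, hd, hdG⟩ := exists_smul_mulVec_mem_stdLattice
    fun A : G => (((A : GL (Fin n) ℚ)⁻¹ : GL (Fin n) ℚ) : Matrix (Fin n) (Fin n) ℚ)
  refine ⟨stdLattice.isLattice_of_smul_mem (iInf_map_mulVecLin_le G _) hd fun v hv => ?_,
    fun A hA => map_iInf_map_mulVecLin G _ hA⟩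
  refine AddSubgroup.mem_iInf.mpr fun A => ?_
  rw [mem_map_mulVecLin_iff, mulVec_smul]
  exact hdG A v hv
end

section
/- Every finite subgroup of GL_n(ℚ) is conjugate in GL_n(ℚ) to a subgroup of GL_n(ℤ). -/
/-!
Let `R` be a PID with fraction field `K` and `G` a finite subgroup of `GL_n(K)`. The `R`-span `L`
of the columns `g eⱼ` of all `g ∈ G` is finitely generated since `G` is finite, spans `Kⁿ` since
`1 ∈ G`, and is `G`-stable since `g (h eⱼ) = (g h) eⱼ`. So `L` is a lattice, hence free of rank
`n`, and an `R`-basis of `L` is a `K`-basis of `Kⁿ` in which every `g ∈ G` has entries in `R`: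
conjugating by the change of basis matrix moves `G` into `GL_n(R)`.
-/

open Matrix

/-- A matrix over `ℚ` lies in `GL_n(ℤ)` if both it and its inverse have integer
entries. -/
def InGLnZ {n : ℕ} (A : GL (Fin n) ℚ) : Prop :=
  (∀ i j, ∃ k : ℤ, ((A : Matrix (Fin n) (Fin n) ℚ) i j) = k) ∧
  (∀ i j, ∃ k : ℤ, (((A⁻¹ : GL (Fin n) ℚ) : Matrix (Fin n) (Fin n) ℚ) i j) = k)

open Module Submodule

variable {R K : Type*} [CommRing R] [Field K] [Algebra R K]

namespace Module.Basis

variable {V : Type*} [AddCommGroup V] [Module K V] [Module R V] [IsScalarTower R K V]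
  [IsFractionRing R K] {κ : Type*} [Fintype κ] {M : Submodule R V} [M.IsLattice K]

theorem extendOfIsLattice_repr_coe (b : Basis κ R M) (x : M) (k : κ) :
    (b.extendOfIsLattice K).repr x k = algebraMap R K (b.repr x k) := by
  have hx : (x : V) = ∑ i, algebraMap R K (b.repr x i) • b.extendOfIsLattice K i := by
    simp only [extendOfIsLattice_apply, algebraMap_smul]
    conv_lhs => rw [← b.sum_repr x]
    simp only [coe_sum, coe_smul_of_tower]
  rw [hx, repr_sum_self]

theorem extendOfIsLattice_toMatrix_mem_range [DecidableEq κ] (b : Basis κ R M)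
    {f : V →ₗ[K] V} (hf : ∀ x ∈ M, f x ∈ M) (i j : κ) :
    LinearMap.toMatrix (b.extendOfIsLattice K) (b.extendOfIsLattice K) f i j ∈
      (algebraMap R K).range := by
  rw [LinearMap.toMatrix_apply, extendOfIsLattice_apply]
  exact ⟨_, (extendOfIsLattice_repr_coe b ⟨_, hf _ (b j).2⟩ i).symm⟩

end Module.Basis

namespace Matrix.GeneralLinearGroup

variable (R) {ι : Type*} [Fintype ι] [DecidableEq ι]

def columnLattice (G : Subgroup (GL ι K)) : Submodule R (ι → K) :=
  span R (⋃ g ∈ G, Set.range fun j => (g : Matrix ι ι K) *ᵥ Pi.single j 1)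

variable {R} {G : Subgroup (GL ι K)}

theorem mulVec_single_mem_columnLattice {g : GL ι K} (hg : g ∈ G) (j : ι) :
    (g : Matrix ι ι K) *ᵥ Pi.single j 1 ∈ columnLattice R G :=
  subset_span (Set.mem_biUnion hg ⟨j, rfl⟩)

theorem mulVec_mem_columnLattice {g : GL ι K} (hg : g ∈ G) {x : ι → K}
    (hx : x ∈ columnLattice R G) : (g : Matrix ι ι K) *ᵥ x ∈ columnLattice R G := by
  suffices columnLattice R G ≤
      (columnLattice R G).comap ((mulVecLin (g : Matrix ι ι K)).restrictScalars R) from this hx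
  refine span_le.mpr ?_
  simp only [Set.iUnion_subset_iff, Set.range_subset_iff]
  intro h hh j
  rw [SetLike.mem_coe, mem_comap, LinearMap.restrictScalars_apply, mulVecLin_apply,
    mulVec_mulVec]
  exact mulVec_single_mem_columnLattice (mul_mem hg hh) j

instance columnLattice.isLattice [Finite G] : (columnLattice R G).IsLattice K where
  fg := fg_span <| Set.Finite.biUnion (Set.toFinite _) fun _ _ => Set.finite_range _
  span_eq_top := by
    rw [eq_top_iff, ← (Pi.basisFun K ι).span_eq, span_le, Set.range_subset_iff]
    intro j
    have hone := mulVec_single_mem_columnLattice (R := R) (one_mem G) j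
    rw [Units.val_one, one_mulVec] at hone
    exact subset_span (Pi.basisFun_apply K ι j ▸ hone)

variable (R) [IsDomain R] [IsPrincipalIdealRing R] [IsFractionRing R K]

theorem exists_conj_mem_range_algebraMap (G : Subgroup (GL ι K)) [Finite G] :
    ∃ P : GL ι K, ∀ A ∈ G, ∀ i j,
      ((P * A * P⁻¹ : GL ι K) : Matrix ι ι K) i j ∈ (algebraMap R K).range := by
  let L := columnLattice R G
  have hcard : Fintype.card (Free.ChooseBasisIndex R L) = Fintype.card ι := by
    rw [← finrank_eq_card_chooseBasisIndex, IsLattice.finrank_of_pi K]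
  let B := ((Free.chooseBasis R L).reindex (Fintype.equivOfCardEq hcard)).extendOfIsLattice K
  let e := Pi.basisFun K ι
  let P : GL ι K :=
    ⟨B.toMatrix e, e.toMatrix B, B.toMatrix_mul_toMatrix_flip e, e.toMatrix_mul_toMatrix_flip B⟩
  have hconj (A : GL ι K) : ((P * A * P⁻¹ : GL ι K) : Matrix ι ι K) =
      LinearMap.toMatrix B B (Matrix.toLin' (A : Matrix ι ι K)) := by
    rw [← basis_toMatrix_mul_linearMap_toMatrix_mul_basis_toMatrix (b := B) (c := B) (b' := e)
        (c' := e), LinearMap.toMatrix_eq_toMatrix', LinearMap.toMatrix'_toLin']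
    rfl
  refine ⟨P, fun A hA i j => ?_⟩
  rw [hconj]
  exact Basis.extendOfIsLattice_toMatrix_mem_range _
    (fun x hx => mulVec_mem_columnLattice hA hx) i j

end Matrix.GeneralLinearGroup

/-- Every finite subgroup of `GL n ℚ` is conjugate in `GL n ℚ` to a subgroup of
`GL n ℤ`. -/
theorem stmt_4 (n : ℕ) (G : Subgroup (GL (Fin n) ℚ)) (hG : Finite G) :
    ∃ P : GL (Fin n) ℚ, ∀ A ∈ G, InGLnZ (P * A * P⁻¹) := by
  obtain ⟨P, hP⟩ := GeneralLinearGroup.exists_conj_mem_range_algebraMap ℤ G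
  have hint : ∀ A ∈ G, ∀ i j, ∃ k : ℤ, ((P * A * P⁻¹ : GL (Fin n) ℚ) : Matrix _ _ ℚ) i j = k :=
    fun A hA i j => (hP A hA i j).imp fun k hk => by rw [← hk, eq_intCast]
  refine ⟨P, fun A hA => ⟨hint A hA, ?_⟩⟩
  rw [show (P * A * P⁻¹)⁻¹ = P * A⁻¹ * P⁻¹ by group]
  exact hint _ (inv_mem hA)
end
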